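/- Dynamic programming with unit time blocks and independent noises (finite state case): let W_1,...,W_T be independent random variables with values in finite sets, X_0,...,X_T finite state spaces, f_t : X_t × U_t × W_{t+1} → X_{t+1} dynamics with finite control sets U_t, and j̃ : X_T → [0,∞]. Define Ṽ_T = j̃ and Ṽ_t(x) = inf_{u ∈ U_t} E[ Ṽ_{t+1}(f_t(x, u, W_{t+1})) ]. Then for every t and x_t ∈ X_t, Ṽ_t(x_t) equals the infimum over adapted control processes (U_t,...,U_{T-1}) (with σ(U_s) ⊆ σ(W_{t+1},...,W_s)) of E[ j̃(X_T) ], where X_t = x_t and X_{s+1} = f_s(X_s, U_s, W_{s+1}). -/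

import Mathlib

open scoped ENNReal
open Classical

/-- Transport of a state along an equality of time indices. -/
def xcast {X : ℕ → Type} {a b : ℕ} (e : a = b) (x : X a) : X b := e ▸ x

/-- The backward dynamic programming value functions
`Ṽ_{t+n} = K`, `Ṽ_t(x) = inf_{u ∈ U_t} E[ Ṽ_{t+1}(f_t(x,u,W_{t+1})) ]`. -/
noncomputable def Vtil {Wn U X : ℕ → Type} {Ω : Type}
    (P : Ω → ℝ≥0∞) (Wp : ∀ s, Ω → Wn s)
    (f : ∀ s, X s → U s → Wn (s + 1) → X (s + 1)) :
    ∀ (n t : ℕ), (X (t + n) → ℝ≥0∞) → X t → ℝ≥0∞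
  | 0, _, K, x => K x
  | n + 1, t, K, x =>
      ⨅ u : U t, ∑' ω : Ω,
        Vtil P Wp f n (t + 1) (fun x' => K (xcast (by omega) x'))
          (f t x u (Wp (t + 1) ω)) * P ω

/-- The random state trajectory `X_t = x`, `X_{s+1} = f_s(X_s, U_s, W_{s+1})` driven by a
control process `Up` and the noises. -/
def traj {Wn U X : ℕ → Type} {Ω : Type}
    (f : ∀ s, X s → U s → Wn (s + 1) → X (s + 1))
    (Up : ∀ s, Ω → U s) (Wp : ∀ s, Ω → Wn s) :
    ∀ (n t : ℕ), X t → Ω → X (t + n)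
  | 0, _, x, _ => x
  | n + 1, t, x, ω => f (t + n) (traj f Up Wp n t x ω) (Up (t + n) ω) (Wp (t + n + 1) ω)

/-! Induction on the number of stages, peeling off the *last* one: `Ṽ` over `n + 1` stages with
terminal cost `K` is `Ṽ` over `n` stages with terminal cost the Bellman update `B K`, where
`(B K)(y) = inf_u c(y, u)` and `c(y, u) = E[K(f_s(y, u, W_{s+1}))]`. For an adapted control,
`X_s` and `U_s` are functions of `W_{t+1}, …, W_s`, and `W_{s+1}` is independent of these, so
`E[K(X_{s+1})] = E[c(X_s, U_s)] ≥ E[(B K)(X_s)]`; equality holds once the control at time `s` is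
replaced by a minimiser of `c(X_s, ·)`, which is still adapted. The independence of `W_{s+1}` from
the other noises follows from the factorisation of the joint mass function: summing it over the
value of `W_{s+1}` shows that the remaining noises have a factorised joint mass function too. -/

theorem Finset.sum_mul_eq_sum_mul_of_sum_fiber_eq {ι κ M : Type*} [Fintype ι]
    [NonUnitalNonAssocSemiring M] (key : ι → κ) {g a b : ι → M}
    (hg : ∀ i j, key i = key j → g i = g j)
    (hab : ∀ j, ∑ i with key i = key j, a i = ∑ i with key i = key j, b i) :
    ∑ i, g i * a i = ∑ i, g i * b i := by
  have hfiber (c : ι → M) (j : ι) :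
      ∑ i with key i = key j, g i * c i = g j * ∑ i with key i = key j, c i := by
    rw [Finset.mul_sum]
    exact Finset.sum_congr rfl fun i hi => by rw [hg i j (Finset.mem_filter.1 hi).2]
  have hmaps : ∀ i ∈ (Finset.univ : Finset ι), key i ∈ Finset.univ.image key :=
    fun i _ => Finset.mem_image_of_mem key (Finset.mem_univ i)
  rw [← Finset.sum_fiberwise_of_maps_to hmaps, ← Finset.sum_fiberwise_of_maps_to hmaps]
  refine Finset.sum_congr rfl fun k hk => ?_
  obtain ⟨j, -, rfl⟩ := Finset.mem_image.1 hk
  rw [hfiber a j, hfiber b j, hab j]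

theorem forall_mem_insert_eq_update_iff {Ω : Type} {Wn : ℕ → Type} {Wp : ∀ s, Ω → Wn s}
    {r : ℕ} {S : Finset ℕ} (hr : r ∉ S) (v : ∀ q, Wn q) (b : Wn r) (ω : Ω) :
    (∀ q ∈ insert r S, Wp q ω = Function.update v r b q)
      ↔ Wp r ω = b ∧ ∀ q ∈ S, Wp q ω = v q := by
  rw [Finset.forall_mem_insert, Function.update_self]
  refine and_congr_right fun _ => forall₂_congr fun q hq => ?_
  rw [Function.update_of_ne (ne_of_mem_of_not_mem hq hr)]

section Independence

variable {Ω : Type} [Fintype Ω] {Wn : ℕ → Type} [∀ s, Fintype (Wn s)]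
  (P : Ω → ℝ≥0∞) (Wp : ∀ s, Ω → Wn s)

noncomputable def jointMass (S : Finset ℕ) (v : ∀ r, Wn r) : ℝ≥0∞ :=
  ∑ ω, if ∀ r ∈ S, Wp r ω = v r then P ω else 0

noncomputable def noiseLaw (r : ℕ) (b : Wn r) : ℝ≥0∞ :=
  ∑ ω, if Wp r ω = b then P ω else 0

def NoiseIndep (S : Finset ℕ) : Prop :=
  ∀ v, jointMass P Wp S v = ∏ r ∈ S, noiseLaw P Wp r (v r)

theorem sum_comp_mul_eq_sum_mul_noiseLaw (r : ℕ) (φ : Wn r → ℝ≥0∞) :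
    ∑ ω, φ (Wp r ω) * P ω = ∑ b, φ b * noiseLaw P Wp r b := by
  simp only [noiseLaw, Finset.mul_sum, mul_ite, mul_zero]
  rw [Finset.sum_comm]
  refine Finset.sum_congr rfl fun ω _ => ?_
  rw [Finset.sum_ite_eq, if_pos (Finset.mem_univ _)]

theorem sum_noiseLaw (hP : ∑ ω, P ω = 1) (r : ℕ) : ∑ b, noiseLaw P Wp r b = 1 := by
  simpa [hP] using (sum_comp_mul_eq_sum_mul_noiseLaw P Wp r fun _ => 1).symm

variable {P Wp}

theorem jointMass_eq_sum_insert {r : ℕ} {S : Finset ℕ} (hr : r ∉ S) (v : ∀ q, Wn q) :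
    jointMass P Wp S v = ∑ b, jointMass P Wp (insert r S) (Function.update v r b) := by
  simp only [jointMass, forall_mem_insert_eq_update_iff hr, ite_and]
  rw [Finset.sum_comm]
  exact Finset.sum_congr rfl fun ω _ => by simp

theorem NoiseIndep.of_insert (hP : ∑ ω, P ω = 1) {r : ℕ} {S : Finset ℕ} (hr : r ∉ S)
    (h : NoiseIndep P Wp (insert r S)) : NoiseIndep P Wp S := by
  intro v
  have hS (b : Wn r) : ∏ q ∈ S, noiseLaw P Wp q (Function.update v r b q)
      = ∏ q ∈ S, noiseLaw P Wp q (v q) :=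
    Finset.prod_congr rfl fun q hq => by rw [Function.update_of_ne (ne_of_mem_of_not_mem hq hr)]
  simp_rw [jointMass_eq_sum_insert hr v, h _, Finset.prod_insert hr, Function.update_self, hS,
    ← Finset.sum_mul, sum_noiseLaw P Wp hP, one_mul]

theorem NoiseIndep.sum_mul_ite_eq (hP : ∑ ω, P ω = 1) {r : ℕ} {S : Finset ℕ} (hr : r ∉ S)
    (h : NoiseIndep P Wp (insert r S)) {g : Ω → ℝ≥0∞}
    (hg : ∀ ω ω', (∀ q ∈ S, Wp q ω = Wp q ω') → g ω = g ω') (b : Wn r) :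
    ∑ ω, g ω * (if Wp r ω = b then P ω else 0) = ∑ ω, g ω * (noiseLaw P Wp r b * P ω) := by
  have hkey (ω ω' : Ω) :
      (fun q : S => Wp q ω) = (fun q : S => Wp q ω') ↔ ∀ q ∈ S, Wp q ω = Wp q ω' := by
    simp [funext_iff]
  refine Finset.sum_mul_eq_sum_mul_of_sum_fiber_eq (fun ω (q : S) => Wp q ω)
    (fun ω ω' h => hg ω ω' ((hkey ω ω').1 h)) fun ω₀ => ?_
  set v : ∀ q, Wn q := fun q => Wp q ω₀
  have hS : jointMass P Wp S (Function.update v r b) = jointMass P Wp S v := by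
    refine Finset.sum_congr rfl fun ω _ => if_congr (forall₂_congr fun q hq => ?_) rfl rfl
    rw [Function.update_of_ne (ne_of_mem_of_not_mem hq hr)]
  calc _ = jointMass P Wp (insert r S) (Function.update v r b) := by
        simp only [Finset.sum_filter, jointMass, forall_mem_insert_eq_update_iff hr, hkey,
          ← ite_and, and_comm]
        rfl
    _ = noiseLaw P Wp r b * jointMass P Wp S v := by
        rw [h, Finset.prod_insert hr, Function.update_self, ← h.of_insert hP hr, hS]
    _ = _ := by
        rw [Finset.sum_filter, jointMass, Finset.mul_sum]
        simp only [hkey, mul_ite, mul_zero]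
        rfl

theorem NoiseIndep.sum_apply_mul_eq (hP : ∑ ω, P ω = 1) {r : ℕ} {S : Finset ℕ} (hr : r ∉ S)
    (h : NoiseIndep P Wp (insert r S)) (F : Ω → Wn r → ℝ≥0∞)
    (hF : ∀ b ω ω', (∀ q ∈ S, Wp q ω = Wp q ω') → F ω b = F ω' b) :
    ∑ ω, F ω (Wp r ω) * P ω = ∑ ω, (∑ ω', F ω (Wp r ω') * P ω') * P ω := by
  have hsplit (ω : Ω) : F ω (Wp r ω) * P ω = ∑ b, F ω b * (if Wp r ω = b then P ω else 0) := by
    simp only [mul_ite, mul_zero]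
    rw [Finset.sum_ite_eq, if_pos (Finset.mem_univ _)]
  calc ∑ ω, F ω (Wp r ω) * P ω = ∑ b, ∑ ω, F ω b * (if Wp r ω = b then P ω else 0) := by
        simp_rw [hsplit]
        exact Finset.sum_comm
    _ = ∑ b, ∑ ω, F ω b * (noiseLaw P Wp r b * P ω) :=
        Finset.sum_congr rfl fun b _ => h.sum_mul_ite_eq hP hr (hF b) b
    _ = ∑ ω, (∑ b, F ω b * noiseLaw P Wp r b) * P ω := by
        rw [Finset.sum_comm]
        simp_rw [Finset.sum_mul, mul_assoc]
    _ = _ := Finset.sum_congr rfl fun ω _ => by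
        rw [sum_comp_mul_eq_sum_mul_noiseLaw P Wp r (F ω)]

/-- `g` is `σ(W_{t+1}, …, W_s)`-measurable. -/
def NoiseMeasurable {α : Type*} (Wp : ∀ s, Ω → Wn s) (t s : ℕ) (g : Ω → α) : Prop :=
  ∀ ω ω', (∀ r, t < r → r ≤ s → Wp r ω = Wp r ω') → g ω = g ω'

theorem NoiseIndep.tsum_apply_succ_mul_eq (hP : ∑ ω, P ω = 1) {T : ℕ}
    (h : NoiseIndep P Wp (Finset.Icc 1 T)) {t s : ℕ} (hs : s < T) (F : Ω → Wn (s + 1) → ℝ≥0∞)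
    (hF : ∀ b, NoiseMeasurable Wp t s (F · b)) :
    ∑' ω, F ω (Wp (s + 1) ω) * P ω = ∑' ω, (∑' ω', F ω (Wp (s + 1) ω') * P ω') * P ω := by
  have hmem : s + 1 ∈ Finset.Icc 1 T := Finset.mem_Icc.2 ⟨by omega, hs⟩
  rw [← Finset.insert_erase hmem] at h
  simp only [tsum_fintype]
  refine h.sum_apply_mul_eq hP (Finset.notMem_erase _ _) F
    fun b ω ω' hω => hF b ω ω' fun q hq hqs => ?_
  exact hω q (Finset.mem_erase.2 ⟨by omega, Finset.mem_Icc.2 ⟨by omega, by omega⟩⟩)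

end Independence

section DynamicProgramming

variable {Wn U X : ℕ → Type} {Ω : Type} (P : Ω → ℝ≥0∞) (Wp : ∀ s, Ω → Wn s)
  (f : ∀ s, X s → U s → Wn (s + 1) → X (s + 1))

noncomputable def stepCost (s : ℕ) (K : X (s + 1) → ℝ≥0∞) (y : X s) (u : U s) : ℝ≥0∞ :=
  ∑' ω, K (f s y u (Wp (s + 1) ω)) * P ω

noncomputable def bellman (s : ℕ) (K : X (s + 1) → ℝ≥0∞) (y : X s) : ℝ≥0∞ :=
  ⨅ u, stepCost P Wp f s K y u

theorem bellman_xcast {a b : ℕ} (e : a = b) (K : X (b + 1) → ℝ≥0∞) (y : X a) :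
    bellman P Wp f b K (xcast e y)
      = bellman P Wp f a (fun z => K (xcast (congrArg (· + 1) e) z)) y := by
  subst e
  rfl

theorem Vtil_succ_eq_Vtil_bellman (n t : ℕ) (K : X (t + (n + 1)) → ℝ≥0∞) (x : X t) :
    Vtil P Wp f (n + 1) t K x = Vtil P Wp f n t (bellman P Wp f (t + n) K) x := by
  induction n generalizing t with
  | zero => rfl
  | succ n ih =>
    rw [Vtil, Vtil]
    simp_rw [ih, bellman_xcast]
    rfl

abbrev AdaptedControl (U : ℕ → Type) (Wp : ∀ s, Ω → Wn s) (t : ℕ) :=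
  {Up : ∀ s, Ω → U s // ∀ s, NoiseMeasurable Wp t s (Up s)}

theorem traj_congr {Up Up' : ∀ s, Ω → U s} {t : ℕ} (x : X t) :
    ∀ n, (∀ s < t + n, Up s = Up' s) → traj f Up Wp n t x = traj f Up' Wp n t x
  | 0, _ => rfl
  | n + 1, h => funext fun ω => by
    change f (t + n) (traj f Up Wp n t x ω) (Up (t + n) ω) (Wp (t + n + 1) ω)
      = f (t + n) (traj f Up' Wp n t x ω) (Up' (t + n) ω) (Wp (t + n + 1) ω)
    rw [traj_congr x n fun s hs => h s (by omega), h (t + n) (by omega)]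

theorem traj_noiseMeasurable {t : ℕ} (Up : AdaptedControl U Wp t) (x : X t) :
    ∀ n, NoiseMeasurable Wp t (t + n) (traj f Up.1 Wp n t x)
  | 0 => fun _ _ _ => rfl
  | n + 1 => fun ω ω' h => by
    change f (t + n) (traj f Up.1 Wp n t x ω) (Up.1 (t + n) ω) (Wp (t + n + 1) ω)
      = f (t + n) (traj f Up.1 Wp n t x ω') (Up.1 (t + n) ω') (Wp (t + n + 1) ω')
    rw [traj_noiseMeasurable Up x n ω ω' fun r h1 h2 => h r h1 (by omega),
      Up.2 (t + n) ω ω' fun r h1 h2 => h r h1 (by omega), h (t + n + 1) (by omega) le_rfl]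

variable [Fintype Ω] [∀ s, Fintype (Wn s)] {P Wp} (hP : ∑ ω, P ω = 1) {T : ℕ}
  (hind : NoiseIndep P Wp (Finset.Icc 1 T))
include hP hind

theorem tsum_traj_succ_mul_eq {n t : ℕ} (hT : t + n < T) (Up : AdaptedControl U Wp t)
    (K : X (t + n + 1) → ℝ≥0∞) (x : X t) :
    ∑' ω, K (traj f Up.1 Wp (n + 1) t x ω) * P ω
      = ∑' ω, stepCost P Wp f (t + n) K (traj f Up.1 Wp n t x ω) (Up.1 (t + n) ω) * P ω :=
  hind.tsum_apply_succ_mul_eq hP hT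
    (fun ω w => K (f (t + n) (traj f Up.1 Wp n t x ω) (Up.1 (t + n) ω) w)) fun w ω ω' h => by
      dsimp only
      rw [traj_noiseMeasurable Wp f Up x n ω ω' h, Up.2 (t + n) ω ω' h]

theorem tsum_bellman_traj_le {n t : ℕ} (hT : t + n < T) (Up : AdaptedControl U Wp t)
    (K : X (t + n + 1) → ℝ≥0∞) (x : X t) :
    ∑' ω, bellman P Wp f (t + n) K (traj f Up.1 Wp n t x ω) * P ω
      ≤ ∑' ω, K (traj f Up.1 Wp (n + 1) t x ω) * P ω := by
  rw [tsum_traj_succ_mul_eq f hP hind hT]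
  exact ENNReal.tsum_le_tsum fun ω => by gcongr; exact iInf_le _ _

theorem exists_tsum_eq_tsum_bellman [∀ s, Fintype (U s)] [∀ s, Nonempty (U s)] {n t : ℕ}
    (hT : t + n < T) (Up : AdaptedControl U Wp t) (K : X (t + n + 1) → ℝ≥0∞) (x : X t) :
    ∃ Up' : AdaptedControl U Wp t, ∑' ω, K (traj f Up'.1 Wp (n + 1) t x ω) * P ω
      = ∑' ω, bellman P Wp f (t + n) K (traj f Up.1 Wp n t x ω) * P ω := by
  choose u hu using fun y : X (t + n) =>
    exists_eq_ciInf_of_finite (f := stepCost P Wp f (t + n) K y)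
  let Up' := Function.update Up.1 (t + n) fun ω => u (traj f Up.1 Wp n t x ω)
  have hpast : traj f Up' Wp n t x = traj f Up.1 Wp n t x :=
    traj_congr Wp f x n fun s hs => Function.update_of_ne hs.ne _ _
  have hadapted : ∀ s, NoiseMeasurable Wp t s (Up' s) := by
    intro s
    rcases eq_or_ne s (t + n) with rfl | hs
    · simp only [Up', Function.update_self]
      exact fun ω ω' h => congrArg u (traj_noiseMeasurable Wp f Up x n ω ω' h)
    · simpa only [Up', Function.update_of_ne hs] using Up.2 s
  refine ⟨⟨Up', hadapted⟩, ?_⟩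
  rw [tsum_traj_succ_mul_eq f hP hind hT ⟨Up', hadapted⟩, hpast]
  simp only [Up', Function.update_self, hu, bellman]

theorem Vtil_eq_iInf_tsum [∀ s, Fintype (U s)] [∀ s, Nonempty (U s)] :
    ∀ n t, t + n ≤ T → ∀ (K : X (t + n) → ℝ≥0∞) (x : X t),
      Vtil P Wp f n t K x = ⨅ Up : AdaptedControl U Wp t, ∑' ω, K (traj f Up.1 Wp n t x ω) * P ω
  | 0, t, _, K, x => by
    have : Nonempty (AdaptedControl U Wp t) :=
      ⟨⟨fun _ _ => Classical.arbitrary _, fun _ _ _ _ => rfl⟩⟩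
    simp [traj, Vtil, tsum_fintype, ← Finset.mul_sum, hP]
  | n + 1, t, hT, K, x => by
    rw [Vtil_succ_eq_Vtil_bellman, Vtil_eq_iInf_tsum n t (by omega)]
    exact le_antisymm (iInf_mono fun Up => tsum_bellman_traj_le f hP hind hT Up K x)
      (iInf_mono' fun Up => (exists_tsum_eq_tsum_bellman f hP hind hT Up K x).imp fun _ h => h.le)

end DynamicProgramming

theorem unit_block_dp_independent_general {Wn U X : ℕ → Type}
    [∀ s, Fintype (Wn s)]
    [∀ s, Fintype (U s)] [∀ s, Nonempty (U s)]
    {Ω : Type} [Fintype Ω]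
    (P : Ω → ℝ≥0∞) (hP : ∑' ω : Ω, P ω = 1)
    (Wp : ∀ s, Ω → Wn s) (T : ℕ)
    (hind : ∀ w : ∀ s, Wn s,
      (∑' ω : Ω, if (∀ s, 1 ≤ s → s ≤ T → Wp s ω = w s) then P ω else 0)
        = ∏ s ∈ Finset.Icc 1 T, ∑' ω : Ω, if Wp s ω = w s then P ω else 0)
    (f : ∀ s, X s → U s → Wn (s + 1) → X (s + 1))
    (jt : X T → ℝ≥0∞)
    (n t : ℕ) (e : t + n = T) (x : X t) :
    Vtil P Wp f n t (fun x' => jt (xcast e x')) x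
      = ⨅ Up : {Up : ∀ s, Ω → U s //
            ∀ (s : ℕ) (ω ω' : Ω),
              (∀ r, t < r → r ≤ s → Wp r ω = Wp r ω') → Up s ω = Up s ω'},
          ∑' ω : Ω, jt (xcast e (traj f Up.1 Wp n t x ω)) * P ω := by
  simp only [tsum_fintype] at hP hind
  have hindep : NoiseIndep P Wp (Finset.Icc 1 T) := fun v => by
    simp only [jointMass, noiseLaw, Finset.mem_Icc, and_imp]
    convert hind v
  exact Vtil_eq_iInf_tsum f hP hindep n t e.le _ x

/-- dynamic programming with unit time blocks and independent noises (finite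
state case). With `W_1,…,W_T` mutually independent (their joint probability mass function
factorizes), `Ṽ_T = j̃` and `Ṽ_t(x) = inf_u E[Ṽ_{t+1}(f_t(x,u,W_{t+1}))]`, the value `Ṽ_t(x_t)`
equals the infimum over adapted control processes (`σ(U_s) ⊆ σ(W_{t+1},…,W_s)`) of
`E[ j̃(X_T) ]` with `X_t = x_t`, `X_{s+1} = f_s(X_s, U_s, W_{s+1})`. -/
theorem unit_block_dp_independent {Wn U X : ℕ → Type}
    [∀ s, Fintype (Wn s)] [∀ s, Nonempty (Wn s)]
    [∀ s, Fintype (U s)] [∀ s, Nonempty (U s)] [∀ s, Fintype (X s)]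
    {Ω : Type} [Fintype Ω] [Nonempty Ω]
    (P : Ω → ℝ≥0∞) (hP : ∑' ω : Ω, P ω = 1)
    (Wp : ∀ s, Ω → Wn s) (T : ℕ)
    (hind : ∀ w : ∀ s, Wn s,
      (∑' ω : Ω, if (∀ s, 1 ≤ s → s ≤ T → Wp s ω = w s) then P ω else 0)
        = ∏ s ∈ Finset.Icc 1 T, ∑' ω : Ω, if Wp s ω = w s then P ω else 0)
    (f : ∀ s, X s → U s → Wn (s + 1) → X (s + 1))
    (jt : X T → ℝ≥0∞)
    (n t : ℕ) (e : t + n = T) (x : X t) :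
    Vtil P Wp f n t (fun x' => jt (xcast e x')) x
      = ⨅ Up : {Up : ∀ s, Ω → U s //
            ∀ (s : ℕ) (ω ω' : Ω),
              (∀ r, t < r → r ≤ s → Wp r ω = Wp r ω') → Up s ω = Up s ω'},
          ∑' ω : Ω, jt (xcast e (traj f Up.1 Wp n t x ω)) * P ω :=
  unit_block_dp_independent_general P hP Wp T hind f jt n t e x
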